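/- Let U ∈ ℝ^{d×n} be a frame, z ∈ ℝ^n a positive vector, c ∈ ℝ^n, and T ⊆ [n] a set with margin γ ≥ 0 (witnessed by threshold ν). Let h(α) := Σ_{j∈T} lev^U_j(z ∘ (1_{T^c} + α·1_T)) be the proxy function. Then for any α ≥ 1 satisfying 0 ≤ h(α) − h(1) ≤ γ, the scaling z' := z ∘ (1_{T^c} + α·1_T) satisfies ‖lev^U(z) − c‖_2² − ‖lev^U(z') − c‖_2² ≥ 2γ·(h(α) − h(1)). -/

import Mathlib

/-!
Scaling up the weights on `T` can only raise the leverage scores in `T` and lower those outside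
(the Gram matrix `U Z Uᵀ` grows in the Loewner order, and leverage scores are invariant under a
global rescaling of `z`), while the total leverage stays `d = tr (U Z Uᵀ)⁻¹ (U Z Uᵀ)`. So the
mass `δ = h(α) - h(1)` gained by `T` is exactly the mass lost by `Tᶜ`, and every single change is
at most `δ ≤ γ`. Coordinatewise, a residual below `ν - γ` that rises by `t ≤ γ`, or one above
`ν + γ` that falls by `t ≤ γ`, shrinks in square by at least `(γ ∓ 2ν) t`; summing gives `2γδ`.
-/

open Matrix BigOperators

/-- Leverage scores: `lev^U_j(z) = z_j · u_jᵀ (U Z Uᵀ)⁻¹ u_j`. -/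
noncomputable def lev {d n : ℕ} (U : Matrix (Fin d) (Fin n) ℝ) (z : Fin n → ℝ)
    (j : Fin n) : ℝ :=
  z j * ((fun i => U i j) ⬝ᵥ ((U * Matrix.diagonal z * Uᵀ)⁻¹ *ᵥ fun i => U i j))

/-- `scale z T α = z ∘ (1_{Tᶜ} + α·1_T)`. -/
def scale {n : ℕ} (z : Fin n → ℝ) (T : Finset (Fin n)) (α : ℝ) : Fin n → ℝ :=
  fun j => if j ∈ T then α * z j else z j

/-- The proxy function `h(α) = Σ_{j∈T} lev^U_j(z ∘ (1_{Tᶜ} + α·1_T))`. -/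
noncomputable def proxyh {d n : ℕ} (U : Matrix (Fin d) (Fin n) ℝ) (z : Fin n → ℝ)
    (T : Finset (Fin n)) (α : ℝ) : ℝ :=
  ∑ j ∈ T, lev U (scale z T α) j

namespace Matrix

variable {m n : Type*} [Fintype m] [Fintype n]

theorem vecMul_injective_of_rank_eq_card {K : Type*} [Field K] {U : Matrix m n K}
    (hU : U.rank = Fintype.card m) : Function.Injective U.vecMul := by
  rw [vecMul_injective_iff, linearIndependent_iff_card_eq_finrank_span, ← hU]
  exact rank_eq_finrank_span_row U

variable [DecidableEq n]

theorem posDef_mul_diagonal_mul_transpose {U : Matrix m n ℝ} (hU : U.rank = Fintype.card m)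
    {w : n → ℝ} (hw : ∀ j, 0 < w j) : (U * diagonal w * Uᵀ).PosDef := by
  simpa using (PosDef.diagonal hw).mul_mul_conjTranspose_same (vecMul_injective_of_rank_eq_card hU)

theorem posSemidef_mul_diagonal_mul_transpose_sub (U : Matrix m n ℝ) {a b : n → ℝ} (hab : b ≤ a) :
    (U * diagonal a * Uᵀ - U * diagonal b * Uᵀ).PosSemidef := by
  rw [← Matrix.sub_mul, ← Matrix.mul_sub, diagonal_sub, ← conjTranspose_eq_transpose_of_trivial]
  exact (PosSemidef.diagonal (sub_nonneg.mpr hab)).mul_mul_conjTranspose_same U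

theorem PosDef.dotProduct_inv_mulVec_le [DecidableEq m] {A B : Matrix m m ℝ} (hA : A.PosDef)
    (hAB : (B - A).PosSemidef) (x : m → ℝ) : x ⬝ᵥ (B⁻¹ *ᵥ x) ≤ x ⬝ᵥ (A⁻¹ *ᵥ x) := by
  have hB : B.PosDef := by simpa using hA.add_posSemidef hAB
  set y := B⁻¹ *ᵥ x
  set w := A⁻¹ *ᵥ x
  have hBy : B *ᵥ y = x := by
    rw [mulVec_mulVec, mul_nonsing_inv _ ((isUnit_iff_isUnit_det _).mp hB.isUnit), one_mulVec]
  have hAw : A *ᵥ w = x := by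
    rw [mulVec_mulVec, mul_nonsing_inv _ ((isUnit_iff_isUnit_det _).mp hA.isUnit), one_mulVec]
  have hAy : w ⬝ᵥ (A *ᵥ y) = x ⬝ᵥ y := by
    rw [dotProduct_mulVec, ← mulVec_transpose, ← conjTranspose_eq_transpose_of_trivial,
      hA.isHermitian.eq, hAw]
  -- `0 ≤ (w - y)ᵀ A (w - y)` and `0 ≤ yᵀ (B - A) y` add up to `0 ≤ xᵀ w - xᵀ y`.
  have hA_nonneg : 0 ≤ (w - y) ⬝ᵥ (A *ᵥ (w - y)) := by
    simpa using hA.posSemidef.dotProduct_mulVec_nonneg (w - y)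
  have hAB_nonneg : 0 ≤ y ⬝ᵥ ((B - A) *ᵥ y) := by
    simpa using hAB.dotProduct_mulVec_nonneg y
  simp only [mulVec_sub, sub_mulVec, dotProduct_sub, sub_dotProduct, hAw, hBy, hAy]
    at hA_nonneg hAB_nonneg
  linarith [dotProduct_comm w x, dotProduct_comm y x]

end Matrix

section Scale

variable {n : ℕ} {z : Fin n → ℝ} {T : Finset (Fin n)} {α : ℝ}

theorem scale_one : scale z T 1 = z := funext fun j => by simp [scale]

theorem scale_pos (hz : ∀ j, 0 < z j) (hα : 0 < α) (j : Fin n) : 0 < scale z T α j := by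
  unfold scale
  split_ifs
  exacts [mul_pos hα (hz j), hz j]

theorem le_scale (hz : ∀ j, 0 < z j) (hα : 1 ≤ α) : z ≤ scale z T α := fun j => by
  unfold scale
  split_ifs
  exacts [le_mul_of_one_le_left (hz j).le hα, le_rfl]

theorem scale_le_smul (hz : ∀ j, 0 < z j) (hα : 1 ≤ α) : scale z T α ≤ α • z := fun j => by
  unfold scale
  split_ifs
  exacts [le_rfl, le_mul_of_one_le_left (hz j).le hα]

end Scale

section Leverage

variable {d n : ℕ} {U : Matrix (Fin d) (Fin n) ℝ}

theorem sum_lev (hU : U.rank = d) {w : Fin n → ℝ} (hw : ∀ j, 0 < w j) :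
    ∑ j, lev U w j = d := by
  set M := U * diagonal w * Uᵀ
  have hM : IsUnit M.det :=
    (isUnit_iff_isUnit_det _).mp (posDef_mul_diagonal_mul_transpose (by simpa) hw).isUnit
  calc ∑ j, lev U w j = trace (M * M⁻¹) := by
        simp only [lev, M, trace, diag, dotProduct, mulVec, mul_apply, diagonal_apply,
          transpose_apply, Finset.mul_sum, Finset.sum_mul, mul_ite, mul_zero,
          Finset.sum_ite_eq', Finset.mem_univ, if_true]
        rw [Finset.sum_comm]
        conv_rhs => rw [Finset.sum_comm]
        refine Finset.sum_congr rfl fun a _ => ?_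
        rw [Finset.sum_comm]
        exact Finset.sum_congr rfl fun _ _ => Finset.sum_congr rfl fun _ _ => by ring
    _ = d := by rw [mul_nonsing_inv _ hM, trace_one, Fintype.card_fin]

theorem lev_smul (hU : U.rank = d) {w : Fin n → ℝ} (hw : ∀ j, 0 < w j) {α : ℝ} (hα : α ≠ 0)
    (j : Fin n) : lev U (α • w) j = lev U w j := by
  have hM : IsUnit (U * diagonal w * Uᵀ).det :=
    (isUnit_iff_isUnit_det _).mp (posDef_mul_diagonal_mul_transpose (by simpa) hw).isUnit
  have hinv : (α • (U * diagonal w * Uᵀ))⁻¹ = α⁻¹ • (U * diagonal w * Uᵀ)⁻¹ :=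
    inv_eq_left_inv (by rw [smul_mul_smul_comm, inv_mul_cancel₀ hα, nonsing_inv_mul _ hM, one_smul])
  simp only [lev, diagonal_smul, Matrix.mul_smul, Matrix.smul_mul, hinv, smul_mulVec,
    dotProduct_smul, Pi.smul_apply, smul_eq_mul]
  field_simp

theorem lev_le_lev_of_le (hU : U.rank = d) {w w' : Fin n → ℝ} (hw : ∀ j, 0 < w j) (hww' : w ≤ w')
    {j : Fin n} (hj : w' j = w j) : lev U w' j ≤ lev U w j := by
  have hM := posDef_mul_diagonal_mul_transpose (U := U) (by simpa) hw
  rw [lev, lev, hj]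
  exact mul_le_mul_of_nonneg_left
    (hM.dotProduct_inv_mulVec_le (posSemidef_mul_diagonal_mul_transpose_sub U hww') _) (hw j).le

theorem lev_le_lev_scale_of_mem (hU : U.rank = d) {z : Fin n → ℝ} (hz : ∀ j, 0 < z j)
    {T : Finset (Fin n)} {α : ℝ} (hα : 1 ≤ α) {j : Fin n} (hj : j ∈ T) :
    lev U z j ≤ lev U (scale z T α) j := by
  have hα₀ : 0 < α := zero_lt_one.trans_le hα
  rw [← lev_smul hU hz hα₀.ne']
  refine lev_le_lev_of_le hU (scale_pos hz hα₀) (scale_le_smul hz hα) ?_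
  simp [scale, hj]

theorem lev_scale_le_lev_of_not_mem (hU : U.rank = d) {z : Fin n → ℝ} (hz : ∀ j, 0 < z j)
    {T : Finset (Fin n)} {α : ℝ} (hα : 1 ≤ α) {j : Fin n} (hj : j ∉ T) :
    lev U (scale z T α) j ≤ lev U z j :=
  lev_le_lev_of_le hU hz (le_scale hz hα) (by simp [scale, hj])

end Leverage

theorem mul_sub_le_sq_sub_sq {a b ν γ : ℝ} (ha : a ≤ ν - γ) (hab : a ≤ b) (hba : b - a ≤ γ) :
    (γ - 2 * ν) * (b - a) ≤ a ^ 2 - b ^ 2 := by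
  nlinarith

theorem two_mul_mul_le_sum_sq_sub_sum_sq {ι : Type*} [Fintype ι] [DecidableEq ι]
    {x y c : ι → ℝ} {T : Finset ι} {γ ν : ℝ} (hsum : ∑ j, x j = ∑ j, y j)
    (hT : ∀ j ∈ T, x j ≤ y j) (hTc : ∀ j ∉ T, y j ≤ x j)
    (hmargin₁ : ∀ j ∈ T, x j - c j ≤ ν - γ) (hmargin₂ : ∀ j ∉ T, ν + γ ≤ x j - c j)
    (hδ : ∑ j ∈ T, (y j - x j) ≤ γ) :
    2 * γ * ∑ j ∈ T, (y j - x j) ≤ ∑ j, (x j - c j) ^ 2 - ∑ j, (y j - c j) ^ 2 := by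
  set δ := ∑ j ∈ T, (y j - x j)
  have hδc : ∑ j ∈ Tᶜ, (x j - y j) = δ := by
    have := Finset.sum_add_sum_compl T (fun j => x j - y j)
    simp only [δ, Finset.sum_sub_distrib] at this ⊢
    linarith
  have hT_le : ∀ j ∈ T, y j - x j ≤ γ := fun j hj =>
    (Finset.single_le_sum (f := fun k => y k - x k)
      (fun k hk => sub_nonneg.mpr (hT k hk)) hj).trans hδ
  have hTc_le : ∀ j ∈ Tᶜ, x j - y j ≤ γ := fun j hj =>
    (Finset.single_le_sum (f := fun k => x k - y k)
      (fun k hk => sub_nonneg.mpr (hTc k (Finset.mem_compl.mp hk))) hj).trans hδc.le |>.trans hδ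
  have hgainT : (γ - 2 * ν) * δ ≤ ∑ j ∈ T, ((x j - c j) ^ 2 - (y j - c j) ^ 2) := by
    rw [Finset.mul_sum]
    refine Finset.sum_le_sum fun j hj => ?_
    have := mul_sub_le_sq_sub_sq (b := y j - c j) (hmargin₁ j hj) (by linarith [hT j hj])
      (by linarith [hT_le j hj])
    rwa [sub_sub_sub_cancel_right] at this
  have hgainTc : (γ + 2 * ν) * δ ≤ ∑ j ∈ Tᶜ, ((x j - c j) ^ 2 - (y j - c j) ^ 2) := by
    rw [← hδc, Finset.mul_sum]
    refine Finset.sum_le_sum fun j hj => ?_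
    have hj' := Finset.mem_compl.mp hj
    have := mul_sub_le_sq_sub_sq (a := -(x j - c j)) (b := -(y j - c j)) (ν := -ν) (γ := γ)
      (by linarith [hmargin₂ j hj']) (by linarith [hTc j hj']) (by linarith [hTc_le j hj])
    rw [neg_sq, neg_sq] at this
    linarith
  calc 2 * γ * δ = (γ - 2 * ν) * δ + (γ + 2 * ν) * δ := by ring
    _ ≤ _ := add_le_add hgainT hgainTc
    _ = _ := by rw [Finset.sum_add_sum_compl, Finset.sum_sub_distrib]

theorem progress_lemma_general {d n : ℕ} (U : Matrix (Fin d) (Fin n) ℝ) (hU : U.rank = d)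
    (z : Fin n → ℝ) (hz : ∀ j, 0 < z j) (c : Fin n → ℝ) (T : Finset (Fin n))
    (γ ν : ℝ)
    (hmargin₁ : ∀ j ∈ T, lev U z j - c j ≤ ν - γ)
    (hmargin₂ : ∀ j ∉ T, ν + γ ≤ lev U z j - c j)
    (α : ℝ) (hα : 1 ≤ α)
    (h1 : proxyh U z T α - proxyh U z T 1 ≤ γ) :
    (∑ j, (lev U z j - c j) ^ 2) - (∑ j, (lev U (scale z T α) j - c j) ^ 2)
      ≥ 2 * γ * (proxyh U z T α - proxyh U z T 1) := by
  have hδ : proxyh U z T α - proxyh U z T 1 = ∑ j ∈ T, (lev U (scale z T α) j - lev U z j) := by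
    rw [proxyh, proxyh, scale_one, Finset.sum_sub_distrib]
  rw [hδ] at h1 ⊢
  refine two_mul_mul_le_sum_sq_sub_sum_sq ?_ (fun j hj => lev_le_lev_scale_of_mem hU hz hα hj)
    (fun j hj => lev_scale_le_lev_of_not_mem hU hz hα hj) hmargin₁ hmargin₂ h1
  rw [sum_lev hU hz, sum_lev hU (scale_pos hz (zero_lt_one.trans_le hα))]

/-- Progress lemma: if `T` has margin `γ` (witnessed by threshold `ν`) and the update
step `α ≥ 1` satisfies `0 ≤ h(α) − h(1) ≤ γ`, then scaling up `T` by `α` decreases the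
squared error by at least `2γ(h(α) − h(1))`. -/
theorem progress_lemma {d n : ℕ} (U : Matrix (Fin d) (Fin n) ℝ) (hU : U.rank = d)
    (z : Fin n → ℝ) (hz : ∀ j, 0 < z j) (c : Fin n → ℝ) (T : Finset (Fin n))
    (γ ν : ℝ) (hγ : 0 ≤ γ)
    (hmargin₁ : ∀ j ∈ T, lev U z j - c j ≤ ν - γ)
    (hmargin₂ : ∀ j ∉ T, ν + γ ≤ lev U z j - c j)
    (α : ℝ) (hα : 1 ≤ α)
    (h0 : 0 ≤ proxyh U z T α - proxyh U z T 1)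
    (h1 : proxyh U z T α - proxyh U z T 1 ≤ γ) :
    (∑ j, (lev U z j - c j) ^ 2) - (∑ j, (lev U (scale z T α) j - c j) ^ 2)
      ≥ 2 * γ * (proxyh U z T α - proxyh U z T 1) :=
  progress_lemma_general U hU z hz c T γ ν hmargin₁ hmargin₂ α hα h1
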